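/- Let 𝔥 be a 6-dimensional real vector space with SU(3)-structure given by normalized compatible stable forms (ω, ψ₋), let 𝔤 = 𝔥 ⊕ ℝ with projection π, and let η be a 1-form on 𝔤 with η(𝔥-component) arbitrary but such that π*h + η·η is positive definite (h the hermitian metric of the SU(3)-structure). Then the 4-form φ = π*(½ω²) + (π*ψ₋) ∧ η on 𝔤 is stable with definite associated form, and its induced metric is g = π*h + η·η. -/

import Mathlib

/- STATEMENT 19: Let 𝔥 be a 6-dimensional real vector space with a normalized
SU(3)-structure (ω, ψ₋) (encoded by an adapted basis b in which ω = f¹²+f³⁴+f⁵⁶ and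
ψ₋ = −f²⁴⁶+f¹³⁶+f¹⁴⁵+f²³⁵; the hermitian metric h is then the one making b
orthonormal).  Let 𝔤 = 𝔥 ⊕ ℝ with projection π, and η a 1-form on 𝔤 such that
G = π*h + η·η is positive definite.  Then the 4-form φ = π*(½ω²) + (π*ψ₋)∧η on 𝔤 is
stable with definite associated form and induced metric G: there is a G-orthonormal
basis of 𝔤 in which φ takes the standard values
Φ₀ = f¹²³⁴+f¹²⁵⁶+f³⁴⁵⁶+f²⁴⁶⁷−f¹³⁶⁷−f¹⁴⁵⁷−f²³⁵⁷.  (0-based indices below.) -/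

noncomputable section

open Module

def δ {n : ℕ} (a b : Fin n) : ℝ := if a = b then 1 else 0

/-- value of fᵃ∧fᵇ∧fᶜ on basis vectors (e_i,e_j,e_k) -/
def fm3 {n : ℕ} (a b c i j k : Fin n) : ℝ :=
  Matrix.det !![δ a i, δ a j, δ a k; δ b i, δ b j, δ b k; δ c i, δ c j, δ c k]

/-- value of fᵃ∧fᵇ∧fᶜ∧fᵈ on basis vectors -/
def fm4 {n : ℕ} (a b c d i j k l : Fin n) : ℝ :=
  Matrix.det !![δ a i, δ a j, δ a k, δ a l; δ b i, δ b j, δ b k, δ b l;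
                δ c i, δ c j, δ c k, δ c l; δ d i, δ d j, δ d k, δ d l]

/-- coefficients of ω = f¹²+f³⁴+f⁵⁶ -/
def Ωc (i j : Fin 6) : ℝ :=
  (δ 0 i * δ 1 j - δ 0 j * δ 1 i) + (δ 2 i * δ 3 j - δ 2 j * δ 3 i)
    + (δ 4 i * δ 5 j - δ 4 j * δ 5 i)

/-- coefficients of ψ₋ = −f²⁴⁶+f¹³⁶+f¹⁴⁵+f²³⁵ -/
def Ψmc (i j k : Fin 6) : ℝ :=
  -fm3 1 3 5 i j k + fm3 0 2 5 i j k + fm3 0 3 4 i j k + fm3 1 2 4 i j k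

/-- coefficients of ψ₊ = f¹³⁵−f¹⁴⁶−f²³⁶−f²⁴⁵ -/
def Ψpc (i j k : Fin 6) : ℝ :=
  fm3 0 2 4 i j k - fm3 0 3 5 i j k - fm3 1 2 5 i j k - fm3 1 3 4 i j k

/-- coefficients of the standard G2 4-form Φ₀ -/
def Φc (i j k l : Fin 7) : ℝ :=
  fm4 0 1 2 3 i j k l + fm4 0 1 4 5 i j k l + fm4 2 3 4 5 i j k l
    + fm4 1 3 5 6 i j k l - fm4 0 2 5 6 i j k l - fm4 0 3 4 6 i j k l
    - fm4 1 2 4 6 i j k l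

/-! ### Integer skeletons of the coefficient functions -/

def ηz' (i : Fin 7) : ℤ := if i = 6 then -1 else 0
def δz' {n : ℕ} (a b : Fin n) : ℤ := if a = b then 1 else 0
def fm3z' {n : ℕ} (a b c i j k : Fin n) : ℤ :=
  δz' a i * (δz' b j * δz' c k - δz' b k * δz' c j)
  - δz' a j * (δz' b i * δz' c k - δz' b k * δz' c i)
  + δz' a k * (δz' b i * δz' c j - δz' b j * δz' c i)
def fm4z' {n : ℕ} (a b c d i j k l : Fin n) : ℤ :=
  δz' a i * fm3z' b c d j k l - δz' a j * fm3z' b c d i k l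
  + δz' a k * fm3z' b c d i j l - δz' a l * fm3z' b c d i j k
def Ωz' (i j : Fin 6) : ℤ :=
  (δz' 0 i * δz' 1 j - δz' 0 j * δz' 1 i) + (δz' 2 i * δz' 3 j - δz' 2 j * δz' 3 i)
    + (δz' 4 i * δz' 5 j - δz' 4 j * δz' 5 i)
def Ψmz' (i j k : Fin 6) : ℤ :=
  -fm3z' 1 3 5 i j k + fm3z' 0 2 5 i j k + fm3z' 0 3 4 i j k + fm3z' 1 2 4 i j k
def Φz' (i j k l : Fin 7) : ℤ :=
  fm4z' 0 1 2 3 i j k l + fm4z' 0 1 4 5 i j k l + fm4z' 2 3 4 5 i j k l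
    + fm4z' 1 3 5 6 i j k l - fm4z' 0 2 5 6 i j k l - fm4z' 0 3 4 6 i j k l
    - fm4z' 1 2 4 6 i j k l
def ext2' (F : Fin 6 → Fin 6 → ℤ) (i j : Fin 7) : ℤ :=
  if h : i.val < 6 ∧ j.val < 6 then F ⟨i.1, h.1⟩ ⟨j.1, h.2⟩ else 0
def ext3' (F : Fin 6 → Fin 6 → Fin 6 → ℤ) (i j k : Fin 7) : ℤ :=
  if h : i.val < 6 ∧ j.val < 6 ∧ k.val < 6 then F ⟨i.1, h.1⟩ ⟨j.1, h.2.1⟩ ⟨k.1, h.2.2⟩ else 0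

set_option maxHeartbeats 4000000 in
theorem key' : ∀ i j k l : Fin 7,
    (ext2' Ωz' i j * ext2' Ωz' k l - ext2' Ωz' i k * ext2' Ωz' j l
      + ext2' Ωz' i l * ext2' Ωz' j k)
    + (ext3' Ψmz' i j k * ηz' l - ext3' Ψmz' i j l * ηz' k
      + ext3' Ψmz' i k l * ηz' j - ext3' Ψmz' j k l * ηz' i)
    = Φz' i j k l := by decide

/-! ### Cast lemmas -/

lemma δ_cast {n : ℕ} (a b : Fin n) : δ a b = ((δz' a b : ℤ) : ℝ) := by
  simp [δ, δz', apply_ite]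

lemma det_fin_four' (A : Matrix (Fin 4) (Fin 4) ℝ) :
    A.det =
      A 0 0 * (A 1 1 * (A 2 2 * A 3 3 - A 2 3 * A 3 2)
        - A 1 2 * (A 2 1 * A 3 3 - A 2 3 * A 3 1)
        + A 1 3 * (A 2 1 * A 3 2 - A 2 2 * A 3 1))
      - A 0 1 * (A 1 0 * (A 2 2 * A 3 3 - A 2 3 * A 3 2)
        - A 1 2 * (A 2 0 * A 3 3 - A 2 3 * A 3 0)
        + A 1 3 * (A 2 0 * A 3 2 - A 2 2 * A 3 0))
      + A 0 2 * (A 1 0 * (A 2 1 * A 3 3 - A 2 3 * A 3 1)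
        - A 1 1 * (A 2 0 * A 3 3 - A 2 3 * A 3 0)
        + A 1 3 * (A 2 0 * A 3 1 - A 2 1 * A 3 0))
      - A 0 3 * (A 1 0 * (A 2 1 * A 3 2 - A 2 2 * A 3 1)
        - A 1 1 * (A 2 0 * A 3 2 - A 2 2 * A 3 0)
        + A 1 2 * (A 2 0 * A 3 1 - A 2 1 * A 3 0)) := by
  rw [Matrix.det_succ_row_zero]
  simp [Fin.sum_univ_succ, Matrix.det_fin_three, Fin.succAbove]
  ring

lemma fm3_cast {n : ℕ} (a b c i j k : Fin n) :
    fm3 a b c i j k = ((fm3z' a b c i j k : ℤ) : ℝ) := by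
  simp [fm3, fm3z', Matrix.det_fin_three, δ_cast]
  try push_cast
  try ring

lemma fm4_cast {n : ℕ} (a b c d i j k l : Fin n) :
    fm4 a b c d i j k l = ((fm4z' a b c d i j k l : ℤ) : ℝ) := by
  rw [fm4, det_fin_four']
  simp [fm4z', fm3z', δ_cast]
  try push_cast
  try ring

lemma Ωc_cast (i j : Fin 6) : Ωc i j = ((Ωz' i j : ℤ) : ℝ) := by
  simp [Ωc, Ωz', δ_cast]; try push_cast
  try ring

lemma Ψmc_cast (i j k : Fin 6) : Ψmc i j k = ((Ψmz' i j k : ℤ) : ℝ) := by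
  simp [Ψmc, Ψmz', fm3_cast]; try push_cast
  try ring

lemma Φc_cast (i j k l : Fin 7) : Φc i j k l = ((Φz' i j k l : ℤ) : ℝ) := by
  simp [Φc, Φz', fm4_cast]; try push_cast
  try ring


lemma ext2'_lt (F : Fin 6 → Fin 6 → ℤ) (i j : Fin 6) :
    ext2' F (Fin.castSucc i) (Fin.castSucc j) = F i j := by
  rw [ext2', dif_pos ⟨by simp, by simp⟩]
  congr 1 <;> exact Fin.ext rfl

lemma ext2'_r6 (F : Fin 6 → Fin 6 → ℤ) (i : Fin 7) : ext2' F i (Fin.last 6) = 0 := by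
  rw [ext2', dif_neg (by simp)]

lemma ext2'_l6 (F : Fin 6 → Fin 6 → ℤ) (j : Fin 7) : ext2' F (Fin.last 6) j = 0 := by
  rw [ext2', dif_neg (by simp)]

lemma ext3'_lt (F : Fin 6 → Fin 6 → Fin 6 → ℤ) (i j k : Fin 6) :
    ext3' F (Fin.castSucc i) (Fin.castSucc j) (Fin.castSucc k) = F i j k := by
  rw [ext3', dif_pos ⟨by simp, by simp, by simp⟩]
  congr 1 <;> exact Fin.ext rfl

lemma ext3'_1 (F : Fin 6 → Fin 6 → Fin 6 → ℤ) (j k : Fin 7) :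
    ext3' F (Fin.last 6) j k = 0 := by rw [ext3', dif_neg (by simp)]

lemma ext3'_2 (F : Fin 6 → Fin 6 → Fin 6 → ℤ) (i k : Fin 7) :
    ext3' F i (Fin.last 6) k = 0 := by rw [ext3', dif_neg (by simp)]

lemma ext3'_3 (F : Fin 6 → Fin 6 → Fin 6 → ℤ) (i j : Fin 7) :
    ext3' F i j (Fin.last 6) = 0 := by rw [ext3', dif_neg (by simp)]

lemma ηz'_last : ηz' (Fin.last 6) = -1 := by decide

lemma ηz'_lt (j : Fin 6) : ηz' (Fin.castSucc j) = 0 := by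
  rw [ηz', if_neg]
  intro hx
  have := congrArg Fin.val hx
  simp at this
  omega


theorem su3_extension_is_positive
    (𝔥 : Type*) [AddCommGroup 𝔥] [Module ℝ 𝔥] [Module.Finite ℝ 𝔥]
    (hdim : finrank ℝ 𝔥 = 6)
    (ω : 𝔥 [⋀^Fin 2]→ₗ[ℝ] ℝ) (ψm : 𝔥 [⋀^Fin 3]→ₗ[ℝ] ℝ)
    (b : Basis (Fin 6) ℝ 𝔥)
    (hω : ∀ i j, ω ![b i, b j] = Ωc i j)
    (hψm : ∀ i j k, ψm ![b i, b j, b k] = Ψmc i j k)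
    -- the hermitian metric h (the one making the adapted basis b orthonormal)
    (h : 𝔥 → 𝔥 → ℝ)
    (hh : ∀ u v, h u v = ∑ i : Fin 6, b.repr u i * b.repr v i)
    -- a 1-form η on 𝔤 = 𝔥 × ℝ such that G = π*h + η·η is positive definite
    (η : Module.Dual ℝ (𝔥 × ℝ))
    (hG : ∀ u : 𝔥 × ℝ, u ≠ 0 → 0 < h u.1 u.1 + η u * η u) :
    ∃ B : Basis (Fin 7) ℝ (𝔥 × ℝ),
      (∀ i j k l : Fin 7,
        ((ω ![(B i).1, (B j).1] * ω ![(B k).1, (B l).1]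
            - ω ![(B i).1, (B k).1] * ω ![(B j).1, (B l).1]
            + ω ![(B i).1, (B l).1] * ω ![(B j).1, (B k).1])
          + (ψm ![(B i).1, (B j).1, (B k).1] * η (B l)
            - ψm ![(B i).1, (B j).1, (B l).1] * η (B k)
            + ψm ![(B i).1, (B k).1, (B l).1] * η (B j)
            - ψm ![(B j).1, (B k).1, (B l).1] * η (B i))) = Φc i j k l) ∧
      (∀ i j : Fin 7,
        h (B i).1 (B j).1 + η (B i) * η (B j) = if i = j then 1 else 0) := by
  classical
  set c := η (0, 1) with hc_def
  have hzero : ∀ x : 𝔥, h x 0 = 0 := by intro x; rw [hh]; simp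
  have hzero' : ∀ x : 𝔥, h 0 x = 0 := by intro x; rw [hh]; simp
  have hc : c ≠ 0 := by
    intro h0
    have hne : ((0, 1) : 𝔥 × ℝ) ≠ 0 := by simp [Prod.ext_iff]
    have := hG (0, 1) hne
    rw [show ((0, 1) : 𝔥 × ℝ).1 = 0 from rfl, hzero, ← hc_def, h0] at this
    simp at this
  have hη00 : η ((0 : 𝔥), (0 : ℝ)) = 0 := by
    rw [show ((0, 0) : 𝔥 × ℝ) = 0 from rfl, map_zero]
  have hsplit : ∀ (x : 𝔥) (t : ℝ), η (x, t) = η (x, 0) + t * c := by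
    intro x t
    have hx : ((x, t) : 𝔥 × ℝ) = (x, 0) + t • ((0 : 𝔥), (1 : ℝ)) := by
      simp [Prod.ext_iff]
    rw [hx, map_add, map_smul, smul_eq_mul, hc_def]
  let η₀ : 𝔥 →ₗ[ℝ] ℝ := η.comp (LinearMap.inl ℝ 𝔥 ℝ)
  let f : (𝔥 × ℝ) →ₗ[ℝ] (𝔥 × ℝ) :=
    (LinearMap.fst ℝ 𝔥 ℝ).prod
      ((-c⁻¹) • (LinearMap.snd ℝ 𝔥 ℝ + η₀.comp (LinearMap.fst ℝ 𝔥 ℝ)))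
  let g : (𝔥 × ℝ) →ₗ[ℝ] (𝔥 × ℝ) :=
    (LinearMap.fst ℝ 𝔥 ℝ).prod
      ((-c) • LinearMap.snd ℝ 𝔥 ℝ - η₀.comp (LinearMap.fst ℝ 𝔥 ℝ))
  have hfapp : ∀ (x : 𝔥) (t : ℝ), f (x, t) = (x, -c⁻¹ * (t + η (x, 0))) := fun x t => rfl
  have hgapp : ∀ (x : 𝔥) (t : ℝ), g (x, t) = (x, -c * t - η (x, 0)) := fun x t => rfl
  have hfg : f.comp g = LinearMap.id := by
    apply LinearMap.ext; rintro ⟨x, t⟩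
    rw [LinearMap.comp_apply, hgapp, hfapp, LinearMap.id_apply]
    refine Prod.ext rfl ?_
    show -c⁻¹ * (-c * t - η (x, 0) + η (x, 0)) = t
    field_simp
    ring
  have hgf : g.comp f = LinearMap.id := by
    apply LinearMap.ext; rintro ⟨x, t⟩
    rw [LinearMap.comp_apply, hfapp, hgapp, LinearMap.id_apply]
    refine Prod.ext rfl ?_
    show -c * (-c⁻¹ * (t + η (x, 0))) - η (x, 0) = t
    field_simp
    try ring
  let L : (𝔥 × ℝ) ≃ₗ[ℝ] (𝔥 × ℝ) := LinearEquiv.ofLinear f g hfg hgf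
  let B0 : Basis (Fin 6 ⊕ Fin 1) ℝ (𝔥 × ℝ) := b.prod (Basis.singleton (Fin 1) ℝ)
  let B : Basis (Fin 7) ℝ (𝔥 × ℝ) := (B0.reindex finSumFinEquiv).map L
  have hB0l : ∀ j : Fin 6, B0 (Sum.inl j) = (b j, 0) := by
    intro j
    exact Prod.ext (b.prod_apply_inl_fst _ j) (b.prod_apply_inl_snd _ j)
  have hB0r : B0 (Sum.inr 0) = (0, 1) := by
    refine Prod.ext (b.prod_apply_inr_fst _ 0) ?_
    rw [b.prod_apply_inr_snd (Basis.singleton (Fin 1) ℝ) 0, Basis.singleton_apply]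
  have hBlt : ∀ j : Fin 6, B (Fin.castSucc j) = (b j, -c⁻¹ * (0 + η (b j, 0))) := by
    intro j
    show L ((B0.reindex finSumFinEquiv) (Fin.castSucc j)) = _
    rw [show Fin.castSucc j = Fin.castAdd 1 j from rfl, Basis.reindex_apply,
      finSumFinEquiv_symm_apply_castAdd, hB0l]
    exact hfapp (b j) 0
  have hB6 : B (Fin.last 6) = (0, -c⁻¹ * (1 + η (0, 0))) := by
    show L ((B0.reindex finSumFinEquiv) (Fin.last 6)) = _
    rw [Basis.reindex_apply, finSumFinEquiv_symm_last, hB0r]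
    exact hfapp 0 1
  have hfst : ∀ j : Fin 6, (B (Fin.castSucc j)).1 = b j := by
    intro j; rw [hBlt j]
  have hfst6 : (B (Fin.last 6)).1 = 0 := by rw [hB6]
  have hη' : ∀ i : Fin 7, η (B i) = ((ηz' i : ℤ) : ℝ) := by
    intro i
    refine Fin.lastCases ?_ (fun j => ?_) i
    · rw [hB6, hsplit, hη00, ηz'_last]
      push_cast
      field_simp
      ring
    · rw [hBlt j, hsplit, ηz'_lt]
      push_cast
      field_simp
      ring
  have hω7 : ∀ i j : Fin 7, ω ![(B i).1, (B j).1] = ((ext2' Ωz' i j : ℤ) : ℝ) := by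
    intro i j
    refine Fin.lastCases ?_ (fun i' => ?_) i
    · rw [ext2'_l6]
      rw [ω.map_coord_zero 0 (show (![(B (Fin.last 6)).1, (B j).1] : Fin 2 → 𝔥) 0 = 0 by
        rw [Matrix.cons_val_zero, hfst6])]
      simp
    · refine Fin.lastCases ?_ (fun j' => ?_) j
      · rw [ext2'_r6]
        rw [ω.map_coord_zero 1 (show (![(B (Fin.castSucc i')).1, (B (Fin.last 6)).1] :
            Fin 2 → 𝔥) 1 = 0 by rw [Matrix.cons_val_one, Matrix.cons_val_zero, hfst6])]
        simp
      · rw [hfst i', hfst j', hω, Ωc_cast, ext2'_lt]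
  have hψ7 : ∀ i j k : Fin 7,
      ψm ![(B i).1, (B j).1, (B k).1] = ((ext3' Ψmz' i j k : ℤ) : ℝ) := by
    intro i j k
    refine Fin.lastCases ?_ (fun i' => ?_) i
    · rw [ext3'_1]
      rw [ψm.map_coord_zero 0 (show (![(B (Fin.last 6)).1, (B j).1, (B k).1] :
          Fin 3 → 𝔥) 0 = 0 by rw [Matrix.cons_val_zero, hfst6])]
      simp
    · refine Fin.lastCases ?_ (fun j' => ?_) j
      · rw [ext3'_2]
        rw [ψm.map_coord_zero 1
          (show (![(B (Fin.castSucc i')).1, (B (Fin.last 6)).1, (B k).1] :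
            Fin 3 → 𝔥) 1 = 0 by rw [Matrix.cons_val_one, Matrix.cons_val_zero, hfst6])]
        simp
      · refine Fin.lastCases ?_ (fun k' => ?_) k
        · rw [ext3'_3]
          rw [ψm.map_coord_zero 2
            (show (![(B (Fin.castSucc i')).1, (B (Fin.castSucc j')).1,
                (B (Fin.last 6)).1] : Fin 3 → 𝔥) 2 = 0 by
              exact hfst6)]
          simp
        · rw [hfst i', hfst j', hfst k', hψm, Ψmc_cast, ext3'_lt]
  have hbb : ∀ a a' : Fin 6, h (b a) (b a') = if a = a' then 1 else 0 := by
    intro a a'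
    rw [hh]
    simp only [Basis.repr_self, Finsupp.single_apply, ite_mul, one_mul, zero_mul]
    rw [Finset.sum_ite_eq]
    simp only [Finset.mem_univ, if_true]
    by_cases hx : a = a'
    · subst hx
      simp
    · rw [if_neg hx, if_neg (fun hq => hx hq.symm)]
  refine ⟨B, ?_, ?_⟩
  · intro i j k l
    rw [hω7 i j, hω7 k l, hω7 i k, hω7 j l, hω7 i l, hω7 j k,
      hψ7 i j k, hψ7 i j l, hψ7 i k l, hψ7 j k l,
      hη' i, hη' j, hη' k, hη' l, Φc_cast]
    exact_mod_cast key' i j k l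
  · intro i j
    rw [hη' i, hη' j]
    refine Fin.lastCases ?_ (fun i' => ?_) i
    · refine Fin.lastCases ?_ (fun j' => ?_) j
      · rw [hfst6, hzero', if_pos rfl, ηz'_last]
        push_cast
        ring
      · rw [hfst6, hzero', ηz'_lt, if_neg (Fin.castSucc_lt_last j').ne']
        push_cast
        ring
    · refine Fin.lastCases ?_ (fun j' => ?_) j
      · rw [hfst6, hzero, ηz'_lt, ηz'_last, if_neg (Fin.castSucc_lt_last i').ne]
        push_cast
        ring
      · rw [hfst i', hfst j', hbb, ηz'_lt, ηz'_lt]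
        by_cases hij : i' = j'
        · subst hij
          rw [if_pos rfl, if_pos rfl]
          push_cast
          ring
        · rw [if_neg hij, if_neg (by simpa [Fin.castSucc_inj] using hij)]
          push_cast
          ring

end
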